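/- arXiv:1305.1230 — 2 statements merged into one kernel-verified Lean document; each statement's English description precedes it below -/
import Mathlib

section
/- (Donsker–Varadhan duality, attainment) Let ℓ : Σ → ℝ be measurable and bounded below, μ a probability measure with Z := ∫ e^{ℓ} dμ < ∞ and ∫ ℓ e^{ℓ} dμ < ∞. Define the tilted probability measure ν* by dν* = (e^{ℓ}/Z) dμ. Then H(ν*||μ) < ∞ and ∫ ℓ dν* − H(ν*||μ) = log Z, so the supremum of ν ↦ ∫ ℓ dν − H(ν||μ) over probability measures with finite relative entropy is attained at ν* with value log ∫ e^{ℓ} dμ. -/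
/-!
Writing `Z = ∫ exp ℓ dμ`, the tilted measure `ν* = μ.tilted ℓ` has log-likelihood ratio
`ℓ - log Z`, which gives the value `log Z` at `ν*`. For any competitor `ν ≪ μ` the chain
rule for log-likelihood ratios gives `H(ν‖ν*) = H(ν‖μ) - ∫ ℓ dν + log Z`, and Gibbs'
inequality `H(ν‖ν*) ≥ 0` is the Donsker–Varadhan bound.
-/

open MeasureTheory Classical

/-- Relative entropy `H(ν‖μ)`: `∫ log (dν/dμ) dν` when `ν ≪ μ` and the
log-likelihood ratio is integrable, `+∞` otherwise. -/
noncomputable def relEnt {Ω : Type*} [MeasurableSpace Ω] (ν μ : Measure Ω) : EReal :=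
  if ν ≪ μ ∧ Integrable (llr ν μ) ν then ((∫ x, llr ν μ x ∂ν : ℝ) : EReal) else ⊤

section

open Real

variable {Ω : Type*} [MeasurableSpace Ω] {μ ν : Measure Ω}

lemma relEnt_of_ac_of_integrable (hac : ν ≪ μ) (hint : Integrable (llr ν μ) ν) :
    relEnt ν μ = ((∫ x, llr ν μ x ∂ν : ℝ) : EReal) :=
  if_pos ⟨hac, hint⟩

lemma relEnt_ne_top_iff : relEnt ν μ ≠ ⊤ ↔ ν ≪ μ ∧ Integrable (llr ν μ) ν := by
  refine ⟨fun h => ?_, fun h => ?_⟩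
  · by_contra hnot
    exact h (if_neg hnot)
  · rw [relEnt_of_ac_of_integrable h.1 h.2]
    exact EReal.coe_ne_top _

lemma toReal_relEnt (hac : ν ≪ μ) (hint : Integrable (llr ν μ) ν) :
    (relEnt ν μ).toReal = ∫ x, llr ν μ x ∂ν := by
  rw [relEnt_of_ac_of_integrable hac hint, EReal.toReal_coe]

lemma integral_llr_nonneg [IsProbabilityMeasure ν] [IsProbabilityMeasure μ]
    (hac : ν ≪ μ) (hint : Integrable (llr ν μ) ν) :
    0 ≤ ∫ x, llr ν μ x ∂ν := by
  simpa using InformationTheory.integral_llr_add_sub_measure_univ_nonneg hac hint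

section Tilted

variable {f : Ω → ℝ}

lemma integrable_tilted_self (hexp : Integrable (fun x => exp (f x)) μ)
    (hfexp : Integrable (fun x => f x * exp (f x)) μ) :
    Integrable f (μ.tilted f) := by
  rw [integrable_tilted_iff hexp]
  simpa only [smul_eq_mul, mul_comm] using hfexp

lemma llr_tilted_self [SigmaFinite μ] (hexp : Integrable (fun x => exp (f x)) μ) :
    llr (μ.tilted f) μ =ᵐ[μ.tilted f] fun x => f x - log (∫ x, exp (f x) ∂μ) :=
  (tilted_absolutelyContinuous μ f).ae_le (log_rnDeriv_tilted_left_self hexp)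

lemma integrable_llr_tilted_self [SigmaFinite μ] (hexp : Integrable (fun x => exp (f x)) μ)
    (hf : Integrable f (μ.tilted f)) :
    Integrable (llr (μ.tilted f) μ) (μ.tilted f) :=
  (hf.sub (integrable_const _)).congr (llr_tilted_self hexp).symm

lemma integral_llr_tilted_self [SigmaFinite μ] [NeZero μ]
    (hexp : Integrable (fun x => exp (f x)) μ)
    (hf : Integrable f (μ.tilted f)) :
    ∫ x, llr (μ.tilted f) μ x ∂(μ.tilted f)
      = ∫ x, f x ∂(μ.tilted f) - log (∫ x, exp (f x) ∂μ) := by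
  have := isProbabilityMeasure_tilted hexp
  rw [integral_congr_ae (llr_tilted_self hexp), integral_sub hf (integrable_const _),
    integral_const, probReal_univ, one_smul]

lemma integral_sub_integral_llr_le_log_integral_exp [IsProbabilityMeasure ν] [SigmaFinite μ]
    [NeZero μ] (hac : ν ≪ μ) (hint : Integrable (llr ν μ) ν) (hf : Integrable f ν)
    (hexp : Integrable (fun x => exp (f x)) μ) :
    ∫ x, f x ∂ν - ∫ x, llr ν μ x ∂ν ≤ log (∫ x, exp (f x) ∂μ) := by
  have := isProbabilityMeasure_tilted hexp
  have hac' : ν ≪ μ.tilted f := hac.trans (absolutelyContinuous_tilted hexp)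
  have gibbs := integral_llr_nonneg hac' (integrable_llr_tilted_right hac hf hint hexp)
  rw [integral_llr_tilted_right hac hf hexp hint] at gibbs
  linarith

end Tilted

end

theorem donsker_varadhan_attained_general {Ω : Type*} [MeasurableSpace Ω] (μ : Measure Ω)
    [IsProbabilityMeasure μ] (ℓ : Ω → ℝ)
    (hexp : Integrable (fun x => Real.exp (ℓ x)) μ)
    (hlexp : Integrable (fun x => ℓ x * Real.exp (ℓ x)) μ) :
    let Z : ℝ := ∫ x, Real.exp (ℓ x) ∂μ
    let νstar : Measure Ω := μ.withDensity (fun x => ENNReal.ofReal (Real.exp (ℓ x) / Z))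
    relEnt νstar μ ≠ ⊤ ∧
      (∫ x, ℓ x ∂νstar) - (relEnt νstar μ).toReal = Real.log Z ∧
      ∀ ν : Measure Ω, IsProbabilityMeasure ν → relEnt ν μ ≠ ⊤ → Integrable ℓ ν →
        (∫ x, ℓ x ∂ν) - (relEnt ν μ).toReal ≤ Real.log Z := by
  intro Z νstar
  change relEnt (μ.tilted ℓ) μ ≠ ⊤ ∧
    ∫ x, ℓ x ∂(μ.tilted ℓ) - (relEnt (μ.tilted ℓ) μ).toReal = _ ∧ _
  have hℓ := integrable_tilted_self hexp hlexp
  have hac := tilted_absolutelyContinuous μ ℓ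
  have hllr := integrable_llr_tilted_self hexp hℓ
  refine ⟨relEnt_ne_top_iff.2 ⟨hac, hllr⟩, ?_, fun ν _ hν hℓν => ?_⟩
  · rw [toReal_relEnt hac hllr, integral_llr_tilted_self hexp hℓ]
    ring
  · obtain ⟨hacν, hint⟩ := relEnt_ne_top_iff.1 hν
    rw [toReal_relEnt hacν hint]
    exact integral_sub_integral_llr_le_log_integral_exp hacν hint hℓν hexp

/-- Donsker–Varadhan duality, attainment: for `ℓ` measurable, bounded
below, with `Z = ∫ e^ℓ dμ < ∞` and `∫ ℓ e^ℓ dμ < ∞`, the tilted measure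
`dν* = (e^ℓ/Z) dμ` has finite relative entropy, achieves
`∫ ℓ dν* − H(ν*‖μ) = log Z`, and dominates every competitor
`∫ ℓ dν − H(ν‖μ) ≤ log Z`. -/
theorem donsker_varadhan_attained {Ω : Type*} [MeasurableSpace Ω] (μ : Measure Ω)
    [IsProbabilityMeasure μ] (ℓ : Ω → ℝ) (hmeas : Measurable ℓ)
    (hbdd : ∃ c : ℝ, ∀ x, c ≤ ℓ x)
    (hexp : Integrable (fun x => Real.exp (ℓ x)) μ)
    (hlexp : Integrable (fun x => ℓ x * Real.exp (ℓ x)) μ) :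
    let Z : ℝ := ∫ x, Real.exp (ℓ x) ∂μ
    let νstar : Measure Ω := μ.withDensity (fun x => ENNReal.ofReal (Real.exp (ℓ x) / Z))
    relEnt νstar μ ≠ ⊤ ∧
      (∫ x, ℓ x ∂νstar) - (relEnt νstar μ).toReal = Real.log Z ∧
      ∀ ν : Measure Ω, IsProbabilityMeasure ν → relEnt ν μ ≠ ⊤ → Integrable ℓ ν →
        (∫ x, ℓ x ∂ν) - (relEnt ν μ).toReal ≤ Real.log Z :=
  donsker_varadhan_attained_general μ ℓ hexp hlexp
end

section
/- Let μ be a probability measure on a finite set A, ℓ : A → ℝ, and 0 < λ₁ ≤ λ₂. Let μ*_λ(x) = e^{ℓ(x)/λ} μ(x)/Σ_u e^{ℓ(u)/λ} μ(u) be the tilted measure at parameter λ. Then H(μ*_{λ₂}||μ) ≤ H(μ*_{λ₁}||μ); i.e., the relative entropy of the tilted measure from the nominal measure is nonincreasing in the tilting temperature λ. -/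
open Finset

/-- the relative entropy `H(μ*_λ‖μ)` of the exponentially tilted
measure `μ*_λ(x) = e^{ℓ(x)/λ} μ(x)/Σ_u e^{ℓ(u)/λ} μ(u)` from the nominal measure
is nonincreasing in the tilting temperature `λ > 0`. -/
theorem tilted_relEnt_antitone {A : Type*} [Fintype A]
    (μ : A → ℝ) (hμ0 : ∀ x, 0 ≤ μ x) (hμ1 : ∑ x, μ x = 1)
    (ℓ : A → ℝ) (lam₁ lam₂ : ℝ) (h1 : 0 < lam₁) (h12 : lam₁ ≤ lam₂) :
    let μt : ℝ → A → ℝ := fun lam x =>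
      Real.exp (ℓ x / lam) * μ x / ∑ u, Real.exp (ℓ u / lam) * μ u
    let H : ℝ → ℝ := fun lam => ∑ x, μt lam x * Real.log (μt lam x / μ x)
    H lam₂ ≤ H lam₁ := by
  intro μt H
  have h2 : 0 < lam₂ := lt_of_lt_of_le h1 h12
  set Z : ℝ → ℝ := fun lam => ∑ u, Real.exp (ℓ u / lam) * μ u with hZdef
  have hZpos : ∀ lam : ℝ, 0 < Z lam := by
    intro lam
    obtain ⟨x, hx⟩ : ∃ x, 0 < μ x := by
      by_contra h
      push_neg at h
      have hz : ∀ x, μ x = 0 := fun x => le_antisymm (h x) (hμ0 x)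
      simp [hz] at hμ1
    exact Finset.sum_pos' (fun i _ => mul_nonneg (Real.exp_pos _).le (hμ0 i))
      ⟨x, Finset.mem_univ x, mul_pos (Real.exp_pos _) hx⟩
  have hμt_nonneg : ∀ lam x, 0 ≤ μt lam x := fun lam x =>
    div_nonneg (mul_nonneg (Real.exp_pos _).le (hμ0 x)) (hZpos lam).le
  have hμt_sum : ∀ lam, ∑ x, μt lam x = 1 := by
    intro lam
    show (∑ x, Real.exp (ℓ x / lam) * μ x / Z lam) = 1
    rw [← Finset.sum_div]
    exact div_self (hZpos lam).ne'
  have hμt_pos : ∀ lam x, 0 < μ x → 0 < μt lam x := fun lam x hx =>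
    div_pos (mul_pos (Real.exp_pos _) hx) (hZpos lam)
  have hμt_zero : ∀ lam x, μ x = 0 → μt lam x = 0 := by
    intro lam x hx
    show Real.exp (ℓ x / lam) * μ x / Z lam = 0
    rw [hx]; simp
  set E : ℝ → ℝ := fun lam => ∑ x, μt lam x * ℓ x with hEdef
  -- Gibbs' inequality between two tilted measures
  have gibbs : ∀ lam lam' : ℝ,
      0 ≤ ∑ x, μt lam x * Real.log (μt lam x / μt lam' x) := by
    intro lam lam'
    have key : ∀ x, μt lam x - μt lam' x ≤ μt lam x * Real.log (μt lam x / μt lam' x) := by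
      intro x
      rcases (hμ0 x).lt_or_eq with hx | hx
      · have hp := hμt_pos lam x hx
        have hq := hμt_pos lam' x hx
        have hlog : Real.log (μt lam' x / μt lam x) ≤ μt lam' x / μt lam x - 1 :=
          Real.log_le_sub_one_of_pos (div_pos hq hp)
        have hneg : Real.log (μt lam x / μt lam' x) = - Real.log (μt lam' x / μt lam x) := by
          rw [← Real.log_inv, inv_div]
        rw [hneg]
        have h' : μt lam x * (μt lam' x / μt lam x - 1) = μt lam' x - μt lam x := by
          field_simp
        nlinarith [mul_le_mul_of_nonneg_left hlog (hμt_nonneg lam x)]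
      · simp [hμt_zero lam x hx.symm, hμt_zero lam' x hx.symm]
    calc (0:ℝ) = ∑ x, (μt lam x - μt lam' x) := by
          rw [Finset.sum_sub_distrib, hμt_sum, hμt_sum]; ring
      _ ≤ _ := Finset.sum_le_sum (fun x _ => key x)
  -- expansion of the Gibbs relative entropy
  have expand : ∀ lam lam' : ℝ, 0 < lam → 0 < lam' →
      ∑ x, μt lam x * Real.log (μt lam x / μt lam' x)
        = (1/lam - 1/lam') * E lam - (Real.log (Z lam) - Real.log (Z lam')) := by
    intro lam lam' hl hl'
    have hterm : ∀ x, μt lam x * Real.log (μt lam x / μt lam' x)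
        = (μt lam x * ℓ x) * (1/lam - 1/lam')
          - μt lam x * (Real.log (Z lam) - Real.log (Z lam')) := by
      intro x
      rcases (hμ0 x).lt_or_eq with hx | hx
      · have hratio : μt lam x / μt lam' x
            = (Real.exp (ℓ x / lam) / Z lam) * (Z lam' / Real.exp (ℓ x / lam')) := by
          have hμx : μ x ≠ 0 := hx.ne'
          show Real.exp (ℓ x / lam) * μ x / Z lam / (Real.exp (ℓ x / lam') * μ x / Z lam') = _
          rw [div_div_div_comm, mul_div_mul_right _ _ hμx, div_div_div_comm,
            div_eq_mul_inv (Real.exp (ℓ x / lam) / Z lam), inv_div]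
        rw [hratio,
          Real.log_mul (div_pos (Real.exp_pos _) (hZpos lam)).ne'
            (div_pos (hZpos lam') (Real.exp_pos _)).ne',
          Real.log_div (Real.exp_ne_zero _) (hZpos lam).ne',
          Real.log_div (hZpos lam').ne' (Real.exp_ne_zero _),
          Real.log_exp, Real.log_exp]
        field_simp
        ring
      · simp [hμt_zero lam x hx.symm]
    rw [Finset.sum_congr rfl (fun x _ => hterm x), Finset.sum_sub_distrib,
      ← Finset.sum_mul, ← Finset.sum_mul, hμt_sum]
    rw [hEdef]
    ring
  -- expansion of H
  have expandH : ∀ lam : ℝ, 0 < lam →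
      H lam = (1/lam) * E lam - Real.log (Z lam) := by
    intro lam hl
    have hterm : ∀ x, μt lam x * Real.log (μt lam x / μ x)
        = (μt lam x * ℓ x) * (1/lam) - μt lam x * Real.log (Z lam) := by
      intro x
      rcases (hμ0 x).lt_or_eq with hx | hx
      · have hratio : μt lam x / μ x = Real.exp (ℓ x / lam) / Z lam := by
          have hμx : μ x ≠ 0 := hx.ne'
          show Real.exp (ℓ x / lam) * μ x / Z lam / μ x = _
          rw [div_div, mul_comm (Z lam) (μ x), ← div_div, mul_div_assoc,
            div_self hμx, mul_one]
        rw [hratio, Real.log_div (by positivity) (hZpos lam).ne', Real.log_exp]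
        field_simp
      · simp [hμt_zero lam x hx.symm, ← hx]
    show (∑ x, μt lam x * Real.log (μt lam x / μ x)) = _
    rw [Finset.sum_congr rfl (fun x _ => hterm x), Finset.sum_sub_distrib,
      ← Finset.sum_mul, ← Finset.sum_mul, hμt_sum]
    rw [hEdef]
    ring
  -- put it together
  rcases eq_or_lt_of_le h12 with rfl | hlt
  · exact le_refl _
  · have G1 := gibbs lam₁ lam₂
    have G2 := gibbs lam₂ lam₁
    rw [expand lam₁ lam₂ h1 h2] at G1
    rw [expand lam₂ lam₁ h2 h1] at G2
    rw [expandH lam₁ h1, expandH lam₂ h2]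
    have hb : 1/lam₂ < 1/lam₁ := one_div_lt_one_div_of_lt h1 hlt
    have hb2 : 0 < 1/lam₂ := by positivity
    -- from G1 + G2: (1/lam₁ - 1/lam₂)(E lam₁ - E lam₂) ≥ 0, so E lam₂ ≤ E lam₁
    have hE : E lam₂ ≤ E lam₁ := by nlinarith
    nlinarith
end
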